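/- Let H be a finite multi-label hypothesis class over domain X and finite label set Y such that for all h, h' ∈ H and all x ∈ X, 2·|h'(x) \ h(x)| ≤ |h(x)|. Then the Set-Valued Weighted Majority Algorithm A has constant set-valued regret: for all T and all sequences (x_t, S_t)_{t=1}^T, E[∑_{t=1}^T 1[ŷ_t ∉ S_t]] − min_{h ∈ H} ∑_{t=1}^T 1[h(x_t) ≠ S_t] ≤ log₂ |H|. -/

import Mathlib

/-!
Writing `M_t` for the algorithm's mistakes and `L_t(i)` for those of hypothesis `i`, the
weights are `w_t(i) = 2 ^ (M_t - L_t(i))`. In one round, let `W₌` be the weight of the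
hypotheses with `h(x) = S` and `W≠` that of the others; the expected total weight changes by
`P(mistake) W₌ - P(correct) W≠ / 2`. If some hypothesis has `h(x) = S`, the condition says that
every `h(x)` has at most `|S| / 2` labels outside `S`, so the mass of wrong labels is at most
`|S| W≠ / 2` while the mass of correct labels is at least `|S| W₌`; hence the change is
`≤ 0`. Therefore `E[2 ^ (M_T - L_T(i))] ≤ E[∑ w_T] ≤ |H|`, and Jensen's inequality for
`z ↦ 2 ^ z` gives `E[M_T] - L_T(i) ≤ log₂ |H|`.
-/

/-- The prefix of length `t` of a root-to-leaf path `σ`. -/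
def pref {Y : Type} {d : ℕ} (σ : Fin d → Y) (t : Fin d) : Fin t.1 → Y :=
  fun i => σ ⟨i.1, i.isLt.trans t.isLt⟩

variable {X Y ι : Type} [Fintype Y] [DecidableEq Y] [Fintype ι]

/-- Weights of the Set-Valued Weighted Majority Algorithm after `t` rounds, as a
(deterministic) function of the sequence of predictions `σ` made so far: on a mistake
(`σ` last ∉ `S t`) the weights of hypotheses with `h i (x t) = S t` are doubled; on a
correct prediction the weights of hypotheses with `h i (x t) ≠ S t` are halved. -/
noncomputable def wAlg (h : ι → X → Finset Y) (x : ℕ → X) (S : ℕ → Finset Y) :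
    (t : ℕ) → (Fin t → Y) → ι → ℝ
  | 0, _, _ => 1
  | t + 1, σ, i =>
      if σ (Fin.last t) ∉ S t then
        (if h i (x t) = S t then 2 * wAlg h x S t (fun j => σ j.castSucc) i
         else wAlg h x S t (fun j => σ j.castSucc) i)
      else
        (if h i (x t) = S t then wAlg h x S t (fun j => σ j.castSucc) i
         else wAlg h x S t (fun j => σ j.castSucc) i / 2)

/-- The (unnormalized) probability assigned to label `y` at round `t`. -/
noncomputable def vAlg (h : ι → X → Finset Y) (x : ℕ → X) (S : ℕ → Finset Y)
    (t : ℕ) (σ : Fin t → Y) (y : Y) : ℝ :=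
  ∑ i : ι, if y ∈ h i (x t) then wAlg h x S t σ i else 0

/-- Probability that the algorithm produces the prediction sequence `π` over `T` rounds. -/
noncomputable def probAlg (h : ι → X → Finset Y) (x : ℕ → X) (S : ℕ → Finset Y)
    (T : ℕ) (π : Fin T → Y) : ℝ :=
  ∏ t : Fin T, vAlg h x S t.1 (pref π t) (π t) / (∑ y : Y, vAlg h x S t.1 (pref π t) y)

open Finset

section OneRound

variable {α κ : Type*} [DecidableEq α] (A : κ → Finset α) (S : Finset α) (w : κ → ℝ)

noncomputable def labelMass [Fintype κ] (y : α) : ℝ :=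
  ∑ i, if y ∈ A i then w i else 0

noncomputable def reweight (y : α) (i : κ) : ℝ :=
  if y ∉ S then (if A i = S then 2 * w i else w i)
  else (if A i = S then w i else w i / 2)

variable [Fintype κ]

lemma labelMass_nonneg (hw : ∀ i, 0 ≤ w i) (y : α) : 0 ≤ labelMass A w y :=
  sum_nonneg fun i _ => by split_ifs <;> simp [hw i]

lemma sum_labelMass (s : Finset α) :
    ∑ y ∈ s, labelMass A w y = ∑ i, (#(s ∩ A i) : ℝ) * w i := by
  simp only [labelMass]
  rw [sum_comm]
  refine sum_congr rfl fun i _ => ?_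
  rw [← sum_filter, filter_mem_eq_inter, sum_const, nsmul_eq_mul]

lemma sum_reweight (y : α) :
    ∑ i, reweight A S w y i =
      ∑ i, w i +
        if y ∉ S then ∑ i with A i = S, w i else -(∑ i with A i ≠ S, w i) / 2 := by
  by_cases hy : y ∈ S
  · rw [if_neg (not_not.mpr hy), sum_filter, ← sum_neg_distrib, sum_div, ← sum_add_distrib]
    refine sum_congr rfl fun i _ => ?_
    by_cases hi : A i = S <;> simp [reweight, hy, hi]
    ring
  · rw [if_pos hy, sum_filter, ← sum_add_distrib]
    refine sum_congr rfl fun i _ => ?_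
    by_cases hi : A i = S <;> simp [reweight, hy, hi]
    ring

lemma card_mul_sum_le_sum_labelMass (hw : ∀ i, 0 ≤ w i) :
    #S * ∑ i with A i = S, w i ≤ ∑ y ∈ S, labelMass A w y := by
  rw [sum_labelMass, mul_sum, sum_filter]
  refine sum_le_sum fun i _ => ?_
  split_ifs with hi
  · rw [hi, inter_self]
  · exact mul_nonneg (Nat.cast_nonneg _) (hw i)

lemma sum_labelMass_pos [Fintype α] (hw : ∀ i, 0 < w i) (hA : ∃ i, (A i).Nonempty) :
    0 < ∑ y, labelMass A w y := by
  obtain ⟨i, hi⟩ := hA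
  rw [sum_labelMass]
  refine sum_pos' (fun j _ => mul_nonneg (Nat.cast_nonneg _) (hw j).le) ⟨i, mem_univ i, ?_⟩
  rw [univ_inter]
  exact mul_pos (Nat.cast_pos.mpr hi.card_pos) (hw i)

variable [Fintype α]

lemma two_mul_sum_compl_labelMass_le (hw : ∀ i, 0 ≤ w i)
    (hS : ∀ i, 2 * #(A i \ S) ≤ #S) :
    2 * ∑ y ∈ Sᶜ, labelMass A w y ≤ #S * ∑ i with A i ≠ S, w i := by
  rw [sum_labelMass, mul_sum, mul_sum, sum_filter]
  refine sum_le_sum fun i _ => ?_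
  split_ifs with hi
  · rw [inter_comm, ← sdiff_eq_inter_compl, ← mul_assoc]
    gcongr
    · exact hw i
    · exact_mod_cast hS i
  · simp [not_not.mp hi, inter_comm, inter_compl]

lemma two_mul_sum_compl_labelMass_mul_le (hw : ∀ i, 0 ≤ w i)
    (hA : ∀ i j, 2 * #(A j \ A i) ≤ #(A i)) :
    2 * (∑ y ∈ Sᶜ, labelMass A w y) * ∑ i with A i = S, w i
      ≤ (∑ y ∈ S, labelMass A w y) * ∑ i with A i ≠ S, w i := by
  have hWS : 0 ≤ ∑ i with A i = S, w i := sum_nonneg fun i _ => hw i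
  have hWN : 0 ≤ ∑ i with A i ≠ S, w i := sum_nonneg fun i _ => hw i
  by_cases hS : ∃ i₀, A i₀ = S
  · obtain ⟨i₀, rfl⟩ := hS
    calc 2 * (∑ y ∈ (A i₀)ᶜ, labelMass A w y) * ∑ i with A i = A i₀, w i
        ≤ #(A i₀) * (∑ i with A i ≠ A i₀, w i) * ∑ i with A i = A i₀, w i :=
          mul_le_mul_of_nonneg_right
            (two_mul_sum_compl_labelMass_le A (A i₀) w hw (hA i₀)) hWS
      _ = #(A i₀) * (∑ i with A i = A i₀, w i) * ∑ i with A i ≠ A i₀, w i := by ring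
      _ ≤ (∑ y ∈ A i₀, labelMass A w y) * ∑ i with A i ≠ A i₀, w i :=
          mul_le_mul_of_nonneg_right (card_mul_sum_le_sum_labelMass A (A i₀) w hw) hWN
  · push Not at hS
    rw [sum_filter, sum_eq_zero fun i _ => if_neg (hS i), mul_zero]
    exact mul_nonneg (sum_nonneg fun y _ => labelMass_nonneg A w hw y) hWN

lemma sum_labelMass_mul_sum_reweight_le (hw : ∀ i, 0 ≤ w i)
    (hA : ∀ i j, 2 * #(A j \ A i) ≤ #(A i)) :
    ∑ y, labelMass A w y * ∑ i, reweight A S w y i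
      ≤ (∑ y, labelMass A w y) * ∑ i, w i := by
  have hsplit : ∑ y, labelMass A w y *
        (if y ∉ S then ∑ i with A i = S, w i else -(∑ i with A i ≠ S, w i) / 2)
      = (∑ y ∈ Sᶜ, labelMass A w y) * (∑ i with A i = S, w i)
        - (∑ y ∈ S, labelMass A w y) * (∑ i with A i ≠ S, w i) / 2 := by
    rw [← sum_compl_add_sum S, sum_mul, sum_mul, sum_div, sub_eq_add_neg,
      ← sum_neg_distrib (s := S)]
    congr 1
    · exact sum_congr rfl fun y hy => by rw [if_pos (mem_compl.mp hy)]
    · exact sum_congr rfl fun y hy => by rw [if_neg (not_not.mpr hy)]; ring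
  simp_rw [sum_reweight, mul_add, sum_add_distrib, ← sum_mul, hsplit]
  linarith [two_mul_sum_compl_labelMass_mul_le A S w hw hA]

lemma sum_div_mul_sum_reweight_le (hw : ∀ i, 0 ≤ w i)
    (hA : ∀ i j, 2 * #(A j \ A i) ≤ #(A i)) :
    ∑ y, (labelMass A w y / ∑ y', labelMass A w y') * ∑ i, reweight A S w y i
      ≤ ∑ i, w i := by
  have hV : 0 ≤ ∑ y, labelMass A w y := sum_nonneg fun y _ => labelMass_nonneg A w hw y
  rcases hV.eq_or_lt with hV | hV
  · simp only [← hV, div_zero, zero_mul, sum_const_zero]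
    exact sum_nonneg fun i _ => hw i
  · simp_rw [div_mul_eq_mul_div, ← sum_div, div_le_iff₀ hV, mul_comm (∑ i, w i)]
    exact sum_labelMass_mul_sum_reweight_le A S w hw hA

end OneRound

lemma pref_snoc_castSucc {α : Type} {d : ℕ} (σ : Fin d → α) (y : α) (j : Fin d) :
    pref (Fin.snoc σ y : Fin (d + 1) → α) j.castSucc = pref σ j :=
  funext fun i => Fin.snoc_castSucc (α := fun _ => α) (p := σ) (x := y)
    (i := ⟨i.1, i.isLt.trans j.isLt⟩)

lemma pref_snoc_last {α : Type} {d : ℕ} (σ : Fin d → α) (y : α) :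
    pref (Fin.snoc σ y : Fin (d + 1) → α) (Fin.last d) = σ :=
  funext fun i => Fin.snoc_castSucc (α := fun _ => α) (p := σ) (x := y) (i := i)

lemma Fintype.sum_pi_fin_succ {α M : Type*} [Fintype α] [AddCommMonoid M] (t : ℕ)
    (f : (Fin (t + 1) → α) → M) :
    ∑ π, f π = ∑ σ : Fin t → α, ∑ y, f (Fin.snoc σ y) := by
  rw [← (Fin.snocEquiv fun _ => α).sum_comp, Fintype.sum_prod_type, sum_comm]
  rfl

section Algorithm

variable {α κ : Type} [DecidableEq α]

def mistakeCount (S : ℕ → Finset α) {t : ℕ} (σ : Fin t → α) : ℝ :=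
  ∑ j : Fin t, if σ j ∉ S j then 1 else 0

def lossCount (h : κ → X → Finset α) (x : ℕ → X) (S : ℕ → Finset α) (t : ℕ)
    (i : κ) : ℝ :=
  ∑ j : Fin t, if h i (x j) ≠ S j then 1 else 0

variable (h : κ → X → Finset α) (x : ℕ → X) (S : ℕ → Finset α)

lemma wAlg_pos : ∀ t (σ : Fin t → α) i, 0 < wAlg h x S t σ i
  | 0, _, _ => one_pos
  | t + 1, σ, i => by
    have := wAlg_pos t (fun j => σ j.castSucc) i
    rw [wAlg]
    split_ifs <;> positivity

lemma wAlg_snoc (t : ℕ) (σ : Fin t → α) (y : α) :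
    wAlg h x S (t + 1) (Fin.snoc σ y) =
      reweight (fun i => h i (x t)) (S t) (wAlg h x S t σ) y := by
  funext i
  simp only [wAlg, reweight, Fin.snoc_last, Fin.snoc_castSucc]

lemma wAlg_eq_two_rpow : ∀ t (σ : Fin t → α) i,
    wAlg h x S t σ i = (2 : ℝ) ^ (mistakeCount S σ - lossCount h x S t i)
  | 0, _, _ => by simp [wAlg, mistakeCount, lossCount]
  | t + 1, σ, i => by
    rw [wAlg, wAlg_eq_two_rpow t]
    simp only [mistakeCount, lossCount, Fin.sum_univ_castSucc, Fin.val_castSucc, Fin.val_last]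
    split_ifs <;> first
      | contradiction
      | rw [add_sub_add_comm, Real.rpow_add two_pos]; norm_num <;> ring

variable [Fintype κ]

lemma vAlg_eq_labelMass (t : ℕ) (σ : Fin t → α) :
    vAlg h x S t σ = labelMass (fun i => h i (x t)) (wAlg h x S t σ) := rfl

variable [Fintype α]

lemma probAlg_snoc (t : ℕ) (σ : Fin t → α) (y : α) :
    probAlg h x S (t + 1) (Fin.snoc σ y) =
      probAlg h x S t σ * (vAlg h x S t σ y / ∑ y', vAlg h x S t σ y') := by
  rw [probAlg, Fin.prod_univ_castSucc]
  simp only [Fin.val_castSucc, Fin.val_last, pref_snoc_castSucc, pref_snoc_last,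
    Fin.snoc_castSucc, Fin.snoc_last]
  rfl

lemma probAlg_nonneg (t : ℕ) (σ : Fin t → α) : 0 ≤ probAlg h x S t σ :=
  prod_nonneg fun _ _ => div_nonneg (labelMass_nonneg _ _ (fun i => (wAlg_pos h x S _ _ i).le) _)
    (sum_nonneg fun y _ => labelMass_nonneg _ _ (fun i => (wAlg_pos h x S _ _ i).le) y)

lemma sum_probAlg_mul_sum_wAlg_le
    (hcond : ∀ i j : κ, ∀ x : X, 2 * ((h j x) \ (h i x)).card ≤ (h i x).card) :
    ∀ t, ∑ σ : Fin t → α, probAlg h x S t σ * ∑ i, wAlg h x S t σ i ≤ Fintype.card κ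
  | 0 => by simp [probAlg, wAlg]
  | t + 1 => by
    refine le_trans ?_ (sum_probAlg_mul_sum_wAlg_le hcond t)
    rw [Fintype.sum_pi_fin_succ]
    refine sum_le_sum fun σ _ => ?_
    simp_rw [probAlg_snoc, wAlg_snoc, mul_assoc, ← mul_sum, vAlg_eq_labelMass]
    exact mul_le_mul_of_nonneg_left
      (sum_div_mul_sum_reweight_le _ _ _ (fun i => (wAlg_pos h x S t σ i).le)
        (fun i j => hcond i j (x t)))
      (probAlg_nonneg h x S t σ)

lemma sum_probAlg_eq_one (T : ℕ) (hne : ∀ u < T, ∃ i, (h i (x u)).Nonempty) :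
    ∑ π : Fin T → α, probAlg h x S T π = 1 := by
  induction T with
  | zero => simp [probAlg]
  | succ t ih =>
    rw [Fintype.sum_pi_fin_succ, ← ih fun u hu => hne u (hu.trans t.lt_succ_self)]
    refine sum_congr rfl fun σ _ => ?_
    have hV : 0 < ∑ y, vAlg h x S t σ y :=
      sum_labelMass_pos _ _ (wAlg_pos h x S t σ) (hne t t.lt_succ_self)
    simp_rw [probAlg_snoc, ← mul_sum, ← sum_div, div_self hV.ne', mul_one]

lemma probAlg_eq_zero {T u : ℕ} (hu : u < T) (hempty : ∀ i, h i (x u) = ∅)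
    (π : Fin T → α) : probAlg h x S T π = 0 := by
  refine prod_eq_zero (mem_univ ⟨u, hu⟩) ?_
  simp [vAlg, hempty]

lemma sum_probAlg_mul_mistakeCount_sub_lossCount_le
    (hcond : ∀ i j : κ, ∀ x : X, 2 * ((h j x) \ (h i x)).card ≤ (h i x).card)
    (T : ℕ) (hne : ∀ u < T, ∃ i, (h i (x u)).Nonempty) (i : κ) :
    ∑ π, probAlg h x S T π * mistakeCount S π - lossCount h x S T i
      ≤ Real.logb 2 (Fintype.card κ) := by
  have hP := sum_probAlg_eq_one h x S T hne
  have hcard : (0 : ℝ) < Fintype.card κ := Nat.cast_pos.mpr (Fintype.card_pos_iff.mpr ⟨i⟩)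
  rw [Real.le_logb_iff_rpow_le one_lt_two hcard]
  calc (2 : ℝ) ^ (∑ π, probAlg h x S T π * mistakeCount S π - lossCount h x S T i)
      = 2 ^ (∑ π, probAlg h x S T π • (mistakeCount S π - lossCount h x S T i)) := by
        simp_rw [smul_eq_mul, mul_sub, sum_sub_distrib, ← sum_mul, hP, one_mul]
    _ ≤ ∑ π, probAlg h x S T π • (2 : ℝ) ^ (mistakeCount S π - lossCount h x S T i) :=
        (convexOn_rpow_left two_pos).map_sum_le (fun π _ => probAlg_nonneg h x S T π) hP
          fun _ _ => Set.mem_univ _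
    _ = ∑ π, probAlg h x S T π * wAlg h x S T π i := by
        simp_rw [smul_eq_mul, wAlg_eq_two_rpow]
    _ ≤ ∑ π, probAlg h x S T π * ∑ j, wAlg h x S T π j := by
        gcongr with π
        · exact probAlg_nonneg h x S T π
        · exact single_le_sum (fun j _ => (wAlg_pos h x S T π j).le) (mem_univ i)
    _ ≤ Fintype.card κ := sum_probAlg_mul_sum_wAlg_le h x S hcond T

end Algorithm

theorem stmt14_general [Nonempty ι] (h : ι → X → Finset Y)
    (hcond : ∀ i j : ι, ∀ x : X, 2 * ((h j x) \ (h i x)).card ≤ (h i x).card)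
    (T : ℕ) (x : ℕ → X) (S : ℕ → Finset Y) :
    (∑ π : Fin T → Y, probAlg h x S T π *
        ∑ t : Fin T, (if π t ∉ S t.1 then (1 : ℝ) else 0))
      - Finset.univ.inf' Finset.univ_nonempty
          (fun i => ∑ t : Fin T, if h i (x t.1) ≠ S t.1 then (1 : ℝ) else 0)
      ≤ Real.logb 2 (Fintype.card ι) := by
  change ∑ π, probAlg h x S T π * mistakeCount S π
    - univ.inf' univ_nonempty (lossCount h x S T) ≤ _
  obtain ⟨i₀, -, hi₀⟩ := exists_mem_eq_inf' univ_nonempty (lossCount h x S T)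
  rw [hi₀]
  by_cases hne : ∀ u < T, ∃ i, (h i (x u)).Nonempty
  · exact sum_probAlg_mul_mistakeCount_sub_lossCount_le h x S hcond T hne i₀
  · -- some round has `h i (x u) = ∅` for all `i`, so `probAlg` vanishes through `0 / 0 = 0`
    push Not at hne
    obtain ⟨u, hu, hempty⟩ := hne
    have hloss : 0 ≤ lossCount h x S T i₀ := sum_nonneg fun _ _ => by positivity
    have hlog : 0 ≤ Real.logb 2 (Fintype.card ι) :=
      Real.logb_nonneg one_lt_two (Nat.one_le_cast.mpr Fintype.card_pos)
    simp only [probAlg_eq_zero h x S hu hempty, zero_mul, sum_const_zero]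
    linarith

/-- For any finite multi-label hypothesis class (given as an injective finite family
`h : ι → X → Finset Y`) satisfying `2|h'(x) \ h(x)| ≤ |h(x)|` for all pairs, the
Set-Valued Weighted Majority Algorithm has expected regret at most log₂ |H|. -/
theorem stmt14 [Nonempty ι] (h : ι → X → Finset Y) (hinj : Function.Injective h)
    (hcond : ∀ i j : ι, ∀ x : X, 2 * ((h j x) \ (h i x)).card ≤ (h i x).card)
    (T : ℕ) (x : ℕ → X) (S : ℕ → Finset Y) :
    (∑ π : Fin T → Y, probAlg h x S T π *
        ∑ t : Fin T, (if π t ∉ S t.1 then (1 : ℝ) else 0))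
      - Finset.univ.inf' Finset.univ_nonempty
          (fun i => ∑ t : Fin T, if h i (x t.1) ≠ S t.1 then (1 : ℝ) else 0)
      ≤ Real.logb 2 (Fintype.card ι) :=
  stmt14_general h hcond T x S
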